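/- arXiv:2405.19105 — 9 statements merged into one kernel-verified Lean document; each statement's English description precedes it below -/
import Mathlib

section
/- Let (X,r) be a bijective set-theoretic solution of the Yang-Baxter equation and let κ : X → X be a bijective reflection for (X,r). Then κ⁻¹ is a reflection for (X, r⁻¹). -/
def YB {X : Type*} (r : X × X → X × X) : Prop :=
  (fun p : X × X × X => ((r (p.1, p.2.1)).1, (r (p.1, p.2.1)).2, p.2.2)) ∘
      (fun p : X × X × X => (p.1, r p.2)) ∘
      (fun p : X × X × X => ((r (p.1, p.2.1)).1, (r (p.1, p.2.1)).2, p.2.2)) =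
    (fun p : X × X × X => (p.1, r p.2)) ∘
      (fun p : X × X × X => ((r (p.1, p.2.1)).1, (r (p.1, p.2.1)).2, p.2.2)) ∘
      (fun p : X × X × X => (p.1, r p.2))

def IsReflection {X : Type*} (r : X × X → X × X) (k : X → X) : Prop :=
  r ∘ (fun p : X × X => (p.1, k p.2)) ∘ r ∘ (fun p : X × X => (p.1, k p.2)) =
    (fun p : X × X => (p.1, k p.2)) ∘ r ∘ (fun p : X × X => (p.1, k p.2)) ∘ r

theorem stmt_3 {X : Type*} (r : (X × X) ≃ (X × X)) (hr : YB r)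
    (k : X ≃ X) (hk : IsReflection r k) :
    IsReflection r.symm k.symm := by
  let K : (X × X) ≃ (X × X) := Equiv.prodCongr (Equiv.refl X) k
  have hcoe : ⇑K = fun p : X × X => (p.1, k p.2) := rfl
  have hcoe' : ⇑K.symm = fun p : X × X => (p.1, k.symm p.2) := rfl
  have h1 : (K.trans r).trans (K.trans r) = (r.trans K).trans (r.trans K) := by
    apply Equiv.coe_fn_injective
    simp only [Equiv.coe_trans]
    calc (⇑r ∘ ⇑K) ∘ (⇑r ∘ ⇑K)
        = ⇑r ∘ (fun p : X × X => (p.1, k p.2)) ∘ ⇑r ∘ (fun p : X × X => (p.1, k p.2)) := by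
          rw [hcoe]; simp [Function.comp_assoc]
      _ = (fun p : X × X => (p.1, k p.2)) ∘ ⇑r ∘ (fun p : X × X => (p.1, k p.2)) ∘ ⇑r := hk
      _ = (⇑K ∘ ⇑r) ∘ (⇑K ∘ ⇑r) := by rw [hcoe]; simp [Function.comp_assoc]
  show ⇑r.symm ∘ ⇑K.symm ∘ ⇑r.symm ∘ ⇑K.symm = ⇑K.symm ∘ ⇑r.symm ∘ ⇑K.symm ∘ ⇑r.symm
  funext x
  have h2 : ((K.trans r).trans (K.trans r)).symm x = ((r.trans K).trans (r.trans K)).symm x := by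
    rw [h1]
  simpa only [Equiv.symm_trans_apply, Function.comp_apply] using h2.symm
end

section
/- Let X be a set, f, g ∈ Sym(X) with fg = gf, and let (X,r) be the Lyubashenko solution r(x,y) = (f(y), g(x)). Then a map κ : X → X is a reflection for (X,r) if and only if κ commutes with fg. In particular, if g = f⁻¹, every map κ : X → X is a reflection. -/
lemma refl_iff {X : Type*} (f g : Equiv.Perm X) (hfg : ∀ x, f (g x) = g (f x))
    (k : X → X) :
    IsReflection (fun p : X × X => ((f p.2 : X), (g p.1 : X))) k ↔
      ∀ x, k (f (g x)) = f (g (k x)) := by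
  unfold IsReflection
  constructor
  · intro h x
    have := congrFun h (x, x)
    simp only [Function.comp_apply] at this
    have h2 := congrArg Prod.snd this
    simp at h2
    rw [hfg, ← h2, hfg]
  · intro h
    funext p
    simp only [Function.comp_apply]
    ext
    · simp
    · simp only
      rw [← hfg, ← h, hfg]

theorem stmt_4 {X : Type*} (f g : Equiv.Perm X) (hfg : ∀ x, f (g x) = g (f x)) :
    (∀ k : X → X,
        IsReflection (fun p : X × X => ((f p.2 : X), (g p.1 : X))) k ↔
          ∀ x, k (f (g x)) = f (g (k x))) ∧
    ((∀ x, g x = f.symm x) →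
      ∀ k : X → X, IsReflection (fun p : X × X => ((f p.2 : X), (g p.1 : X))) k) := by
  refine ⟨refl_iff f g hfg, fun hinv k => ?_⟩
  rw [refl_iff f g hfg]
  intro x
  simp [hinv]
end

section
/- Let (X,▷) be a left rack and let (X, r_▷) be its associated solution r_▷(x,y) = (y, y▷x). Then a map κ : X → X is a reflection for (X, r_▷) if and only if κ is a shelf endomorphism of (X,▷) (i.e. κ(x ▷ y) = κ(x) ▷ κ(y) for all x,y) satisfying κ L_x = κ L_{κ(x)} for all x ∈ X, where L_x(y) = x ▷ y. -/
theorem stmt_10 {X : Type*} (t : X → X → X)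
    (hsd : ∀ x y z : X, t x (t y z) = t (t x y) (t x z))
    (hrack : ∀ x : X, Function.Bijective (t x))
    (k : X → X) :
    IsReflection (fun p : X × X => (p.2, t p.2 p.1)) k ↔
      ((∀ x y : X, k (t x y) = t (k x) (k y)) ∧
        ∀ x y : X, k (t x y) = k (t (k x) y)) := by
  have key : IsReflection (fun p : X × X => (p.2, t p.2 p.1)) k ↔
      ∀ x y : X, (k (t (k y) x), t (k (t (k y) x)) (k y)) =
        (k (t y x), k (t (k (t y x)) y)) := by
    constructor
    · intro h x y
      have := congrFun h (x, y)
      simpa [IsReflection, Function.comp] using this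
    · intro h
      unfold IsReflection
      funext p
      obtain ⟨x, y⟩ := p
      simpa [Function.comp] using h x y
  rw [key]
  constructor
  · intro h
    have h1 : ∀ x y : X, k (t (k y) x) = k (t y x) := fun x y =>
      congrArg Prod.fst (h x y)
    have h2 : ∀ x y : X, t (k (t (k y) x)) (k y) = k (t (k (t y x)) y) := fun x y =>
      congrArg Prod.snd (h x y)
    have hB : ∀ x y : X, k (t x y) = k (t (k x) y) := fun x y => (h1 y x).symm
    refine ⟨?_, hB⟩
    intro a b
    obtain ⟨x, hx⟩ := (hrack b).2 a
    have e := h2 x b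
    rw [h1 x b, hx] at e
    have e2 : k (t (k a) b) = k (t a b) := h1 b a
    rw [e2] at e
    exact e.symm
  · rintro ⟨hA, hB⟩ x y
    have f1 : k (t (k y) x) = k (t y x) := (hB y x).symm
    refine Prod.ext f1 ?_
    rw [f1, ← hB (t y x) y, hA (t y x) y]
end

section
/- Let (X,▷) be a left shelf with associated solution r_▷(x,y) = (y, y▷x), and let a ∈ X. Then the following are equivalent: (1) L_a is a reflection for (X, r_▷); (2) L_a L_x = L_a L_{L_a(x)} for all x ∈ X; (3) L_{L_a(x)} L_a = L_a L_{L_a(x)} for all x ∈ X. -/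
theorem stmt_11 {X : Type*} (t : X → X → X)
    (hsd : ∀ x y z : X, t x (t y z) = t (t x y) (t x z)) (a : X) :
    (IsReflection (fun p : X × X => (p.2, t p.2 p.1)) (t a) ↔
        ∀ x y : X, t a (t x y) = t a (t (t a x) y)) ∧
    ((∀ x y : X, t a (t x y) = t a (t (t a x) y)) ↔
        ∀ x y : X, t (t a x) (t a y) = t a (t (t a x) y)) := by
  constructor
  · constructor
    · intro h x y
      have h1 := congrFun h (y, x)
      simp only [IsReflection, Function.comp] at h1
      exact (congrArg Prod.fst h1).symm
    · intro h
      funext p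
      obtain ⟨y, x⟩ := p
      simp only [Function.comp]
      refine Prod.ext ?_ ?_
      · exact (h x y).symm
      · simp only
        rw [← hsd, ← h (t x y) x, hsd a (t (t a x) y) x, hsd a (t x y) x, ← h x y]
  · constructor
    · intro h x y
      rw [← hsd, h]
    · intro h x y
      rw [← h, ← hsd]
end

section
/- Let (X,▷) be a left rack. If κ : X → X is an idempotent shelf endomorphism of (X,▷) (i.e. κ² = κ and κ(x▷y) = κ(x)▷κ(y)), then κ is a reflection for the associated solution r_▷(x,y) = (y, y▷x). -/
theorem stmt_12 {X : Type*} (t : X → X → X)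
    (hsd : ∀ x y z : X, t x (t y z) = t (t x y) (t x z))
    (hrack : ∀ x : X, Function.Bijective (t x))
    (k : X → X) (hidem : k ∘ k = k)
    (hend : ∀ x y : X, k (t x y) = t (k x) (k y)) :
    IsReflection (fun p : X × X => (p.2, t p.2 p.1)) k := by
  have hk : ∀ x, k (k x) = k x := fun x => congrFun hidem x
  funext p
  obtain ⟨x, y⟩ := p
  simp only [IsReflection, Function.comp_apply]
  have h1 : k (t (k y) x) = k (t y x) := by
    rw [hend, hend, hk]
  refine Prod.ext ?_ ?_
  · simpa using h1
  · show t (k (t (k y) x)) (k y) = k (t (k (t y x)) y)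
    rw [hend, hend, hk, hend, hend, hk, hk]
end

section
/- Let (X,▷) be a left rack. An injective map κ : X → X that is a shelf endomorphism of (X,▷) is a reflection for the associated solution r_▷(x,y)=(y,y▷x) if and only if κ commutes with L_x for every x ∈ X. -/
theorem stmt_14 {X : Type*} (t : X → X → X)
    (hsd : ∀ x y z : X, t x (t y z) = t (t x y) (t x z))
    (hrack : ∀ x : X, Function.Bijective (t x))
    (k : X → X) (hinj : Function.Injective k)
    (hend : ∀ x y : X, k (t x y) = t (k x) (k y)) :
    IsReflection (fun p : X × X => (p.2, t p.2 p.1)) k ↔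
      ∀ x y : X, k (t x y) = t x (k y) := by
  constructor
  · intro h x y
    have h1 : ∀ a b : X, t (k b) a = t b a := by
      intro a b
      have := congrArg Prod.fst (congrFun h (a, b))
      simp only [IsReflection, Function.comp] at this
      exact hinj this
    exact (hend x y).trans (h1 _ _)
  · intro h
    simp only [IsReflection]
    funext p
    obtain ⟨x, y⟩ := p
    simp only [Function.comp]
    have h1 : k (t (k y) x) = k (t y x) := (h _ _).trans (hend _ _).symm
    refine Prod.ext h1 ?_
    simp only []
    rw [h1]
    exact (h _ _).symm
end

section
/- Let (X,▷) be a left rack and a ∈ X. The left multiplication L_a is a reflection for the associated solution r_▷(x,y)=(y,y▷x) if and only if L_a lies in the center of the left multiplication group LMlt(X,▷) = ⟨L_x : x ∈ X⟩, i.e. L_a commutes with L_x for all x ∈ X. -/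
theorem stmt_15 {X : Type*} (t : X → X → X)
    (hsd : ∀ x y z : X, t x (t y z) = t (t x y) (t x z))
    (hrack : ∀ x : X, Function.Bijective (t x))
    (a : X) :
    IsReflection (fun p : X × X => (p.2, t p.2 p.1)) (t a) ↔
      ∀ x y : X, t a (t x y) = t x (t a y) := by
  constructor
  · intro h x y
    have h1 := congrFun h (y, x)
    have e : t a (t (t a x) y) = t a (t x y) := congrArg Prod.fst h1
    have e2 : t (t a x) y = t x y := (hrack a).1 e
    calc t a (t x y) = t (t a x) (t a y) := hsd a x y
      _ = t x (t a y) := by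
          have h1' := congrFun h (t a y, x)
          have e' : t a (t (t a x) (t a y)) = t a (t x (t a y)) := congrArg Prod.fst h1'
          exact (hrack a).1 e'
  · intro hc
    have key : ∀ x y z : X, t (t a x) y = t x y := by
      intro x y z
      obtain ⟨w, hw⟩ := (hrack a).2 y
      subst hw
      calc t (t a x) (t a w) = t a (t x w) := (hsd a x w).symm
        _ = t x (t a w) := hc x w
    funext p
    obtain ⟨x, y⟩ := p
    simp only [Function.comp]
    refine Prod.ext ?_ ?_
    · show t a (t (t a y) x) = t a (t y x)
      exact congrArg (t a) (key y x x)
    · show t (t a (t (t a y) x)) (t a y) = t a (t (t a (t y x)) y)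
      rw [key y x x, hc (t a (t y x)) y]
end

section
/- Let n ∈ ℕ and let (ℤ_n, ▷) be the dihedral quandle with i ▷ j = 2i − j (mod n). A map f_{b,a}(x) = b + ax (with a,b ∈ ℤ_n) is a reflection for the associated solution r_▷(x,y) = (y, y▷x) if and only if 2ab = 0 (mod n) and 2a(a−1) = 0 (mod n). -/
theorem stmt_16 (n : ℕ) (a b : ZMod n) :
    IsReflection (fun p : ZMod n × ZMod n => (p.2, 2 * p.2 - p.1))
        (fun x => b + a * x) ↔
      (2 * a * b = 0 ∧ 2 * a * (a - 1) = 0) := by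
  unfold IsReflection
  constructor
  · intro h
    have h1 := congrFun h (1, 0)
    have h2 := congrFun h (0, 1)
    simp [Function.comp, Prod.ext_iff] at h1 h2
    obtain ⟨e1, e2⟩ := h1
    obtain ⟨e3, e4⟩ := h2
    constructor
    · linear_combination e1
    · linear_combination e3 - e1
  · rintro ⟨h1, h2⟩
    funext p
    obtain ⟨x, y⟩ := p
    simp only [Function.comp, Prod.ext_iff]
    constructor
    · linear_combination h1 + y * h2
    · linear_combination h1 + x * h2
end

section
/- Let (X,r) be a set-theoretic solution of the Yang-Baxter equation, κ a reflection for (X,r), and φ, ψ : X → X maps that are simultaneously λ-centralizing (λ_x φ = φ λ_x for all x), ρ-centralizing (ρ_x φ = φ ρ_x for all x), λ-invariant (λ_{φ(x)} = λ_x for all x), and ρ-invariant (ρ_{φ(x)} = ρ_x for all x), and similarly for ψ. Then ω := φ κ ψ is a reflection for (X,r). -/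
theorem stmt_19 {X : Type*} (lam rho : X → X → X)
    (r : X × X → X × X)
    (hr : ∀ x y : X, r (x, y) = (lam x y, rho y x))
    (hYB : YB r) (k φ ψ : X → X)
    (hk : IsReflection r k)
    (hφl : ∀ x y : X, lam x (φ y) = φ (lam x y))
    (hφr : ∀ x y : X, rho x (φ y) = φ (rho x y))
    (hφli : ∀ x : X, lam (φ x) = lam x)
    (hφri : ∀ x : X, rho (φ x) = rho x)
    (hψl : ∀ x y : X, lam x (ψ y) = ψ (lam x y))
    (hψr : ∀ x y : X, rho x (ψ y) = ψ (rho x y))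
    (hψli : ∀ x : X, lam (ψ x) = lam x)
    (hψri : ∀ x : X, rho (ψ x) = rho x) :
    IsReflection r (φ ∘ k ∘ ψ) := by
  have hk' : ∀ x y : X, (lam (lam x (k y)) (k (rho (k y) x)),
      rho (k (rho (k y) x)) (lam x (k y))) =
      (lam (lam x y) (k (rho y x)), k (rho (k (rho y x)) (lam x y))) := by
    intro x y
    have := congrFun hk (x, y)
    simpa [IsReflection, Function.comp, hr] using this
  unfold IsReflection
  funext p
  obtain ⟨x, y⟩ := p
  simp only [Function.comp, hr, hφl, hφr, hφli, hφri, hψl, hψr, hψli, hψri]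
  have h := hk' (ψ x) (ψ y)
  simp only [hψl, hψr, hψli, hψri] at h
  rw [Prod.mk.injEq] at h ⊢
  exact ⟨congrArg φ h.1, congrArg φ h.2⟩
end
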